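/- Let L be a countably infinite type with a bijection f : ℕ → L. For each n ≥ 1 set B_n = f '' {1, …, n} and C_n = C'({f 0}, B_n). Then each C_n is a finite consequence operator, the pointwise infimum D defined by D(A) = ⋂_{n ≥ 1} C_n(A) equals C'({f 0}, f '' {k | k ≥ 1}), and D is a consequence operator that is not a finite consequence operator. Consequently, the lattice of finite consequence operators on L is not meet-complete. -/

import Mathlib

def IsConseq {L : Type*} (C : Set L → Set L) : Prop :=
  (∀ X, X ⊆ C X) ∧ (∀ X Y : Set L, X ⊆ Y → C X ⊆ C Y) ∧ (∀ X, C (C X) = C X)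

def IsFinConseq {L : Type*} (C : Set L → Set L) : Prop :=
  IsConseq C ∧ ∀ X, C X = ⋃ F ∈ {F : Set L | F ⊆ X ∧ F.Finite}, C F

open Classical in
/-- The operator `C'(X,Y)`: `C'(X,Y)(A) = A ∪ X` if `Y ⊆ A`, and `A` otherwise. -/
noncomputable def Cop' {L : Type*} (X Y : Set L) (A : Set L) : Set L :=
  if Y ⊆ A then A ∪ X else A

lemma cop'_pos {L : Type*} {X Y A : Set L} (h : Y ⊆ A) : Cop' X Y A = A ∪ X := if_pos h

lemma cop'_neg {L : Type*} {X Y A : Set L} (h : ¬ Y ⊆ A) : Cop' X Y A = A := if_neg h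

lemma subset_cop' {L : Type*} (X Y A : Set L) : A ⊆ Cop' X Y A := by
  unfold Cop'; split <;> simp

lemma cop'_mono {L : Type*} (X Y : Set L) {A B : Set L} (h : A ⊆ B) :
    Cop' X Y A ⊆ Cop' X Y B := by
  by_cases h1 : Y ⊆ A
  · rw [cop'_pos h1, cop'_pos (h1.trans h)]
    exact Set.union_subset_union_left _ h
  · rw [cop'_neg h1]
    exact h.trans (subset_cop' X Y B)

lemma cop'_conseq {L : Type*} (X Y : Set L) : IsConseq (Cop' X Y) := by
  refine ⟨fun A => subset_cop' X Y A, fun A B => cop'_mono X Y, fun A => ?_⟩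
  by_cases h : Y ⊆ A
  · rw [cop'_pos h, cop'_pos (h.trans Set.subset_union_left), Set.union_assoc, Set.union_self]
  · rw [cop'_neg h, cop'_neg h]

lemma cop'_finconseq {L : Type*} (X : Set L) {Y : Set L} (hY : Y.Finite) :
    IsFinConseq (Cop' X Y) := by
  refine ⟨cop'_conseq X Y, fun A => ?_⟩
  apply Set.Subset.antisymm
  · intro a ha
    by_cases h : Y ⊆ A
    · rw [cop'_pos h] at ha
      rcases ha with ha | ha
      · refine Set.mem_biUnion (show Y ∪ {a} ∈ _ from ⟨Set.union_subset h (by simpa), hY.union (Set.finite_singleton a)⟩) ?_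
        rw [cop'_pos Set.subset_union_left]
        exact Or.inl (Or.inr rfl)
      · refine Set.mem_biUnion (show Y ∈ _ from ⟨h, hY⟩) ?_
        rw [cop'_pos subset_rfl]
        exact Or.inr ha
    · rw [cop'_neg h] at ha
      exact Set.mem_biUnion (show {a} ∈ _ from ⟨by simpa, Set.finite_singleton a⟩)
        (subset_cop' X Y {a} rfl)
  · refine Set.iUnion₂_subset fun F hF => cop'_mono X Y hF.1

theorem stmt_15 {L : Type*} (f : ℕ → L) (hf : Function.Bijective f) :
    -- each `C_n = C'({f 0}, f '' [1, n])` is a finite consequence operator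
    (∀ n : ℕ, 1 ≤ n → IsFinConseq (Cop' {f 0} (f '' Set.Icc 1 n))) ∧
    -- the pointwise infimum `D` equals `C'({f 0}, f '' {k | k ≥ 1})`
    (∀ A : Set L,
      (⋂ n ∈ {n : ℕ | 1 ≤ n}, Cop' {f 0} (f '' Set.Icc 1 n) A) =
        Cop' {f 0} (f '' {k : ℕ | 1 ≤ k}) A) ∧
    -- `D` is a consequence operator but not a finite consequence operator
    IsConseq (fun A : Set L => ⋂ n ∈ {n : ℕ | 1 ≤ n}, Cop' {f 0} (f '' Set.Icc 1 n) A) ∧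
    ¬ IsFinConseq (fun A : Set L => ⋂ n ∈ {n : ℕ | 1 ≤ n}, Cop' {f 0} (f '' Set.Icc 1 n) A) := by
  have hinj := hf.injective
  have key : ∀ A : Set L,
      (⋂ n ∈ {n : ℕ | 1 ≤ n}, Cop' {f 0} (f '' Set.Icc 1 n) A) =
        Cop' {f 0} (f '' {k : ℕ | 1 ≤ k}) A := by
    intro A
    by_cases h : f '' {k : ℕ | 1 ≤ k} ⊆ A
    · rw [cop'_pos h]
      apply Set.Subset.antisymm
      · intro a ha
        have := Set.mem_iInter₂.mp ha 1 (show (1:ℕ) ∈ {n : ℕ | 1 ≤ n} by simp)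
        rwa [cop'_pos ((Set.image_mono (f := f) (by intro k hk; exact hk.1)).trans h)] at this
      · apply Set.subset_iInter₂
        intro n hn
        rw [cop'_pos ((Set.image_mono (f := f) (fun k hk => hk.1)).trans h)]
    · rw [cop'_neg h]
      obtain ⟨k, hk, hka⟩ : ∃ k, 1 ≤ k ∧ f k ∉ A := by
        by_contra hc
        push_neg at hc
        exact h (by rintro x ⟨k, hk, rfl⟩; exact hc k hk)
      apply Set.Subset.antisymm
      · intro a ha
        have := Set.mem_iInter₂.mp ha k (show k ∈ {n : ℕ | 1 ≤ n} from hk)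
        rwa [cop'_neg (fun hs => hka (hs (Set.mem_image_of_mem f (Set.mem_Icc.mpr ⟨hk, le_refl k⟩))))] at this
      · exact Set.subset_iInter₂ fun n hn => subset_cop' _ _ A
  have keyD : (fun A : Set L => ⋂ n ∈ {n : ℕ | 1 ≤ n}, Cop' {f 0} (f '' Set.Icc 1 n) A)
      = Cop' {f 0} (f '' {k : ℕ | 1 ≤ k}) := funext key
  refine ⟨fun n hn => cop'_finconseq _ ((Set.finite_Icc 1 n).image f), key, ?_, ?_⟩
  · rw [keyD]; exact cop'_conseq _ _
  · rw [keyD]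
    rintro ⟨-, hfin⟩
    set Y := f '' {k : ℕ | 1 ≤ k} with hY
    have hYinf : Y.Infinite := Set.Infinite.image (Set.injOn_of_injective hinj)
      (Set.infinite_of_not_bddAbove (by
        rintro ⟨b, hb⟩
        have := hb (show b + 1 ∈ {k : ℕ | 1 ≤ k} by simp)
        omega))
    have hf0 : f 0 ∉ Y := by
      rintro ⟨k, hk, hkk⟩
      rw [hinj hkk] at hk
      simp at hk
    have h0 : f 0 ∈ Cop' {f 0} Y Y := by
      rw [cop'_pos subset_rfl]; exact Or.inr rfl
    rw [hfin Y] at h0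
    obtain ⟨F, ⟨hFY, hFfin⟩, hmem⟩ := Set.mem_iUnion₂.mp h0
    have : ¬ Y ⊆ F := fun hs => hYinf (hFfin.subset hs)
    rw [cop'_neg this] at hmem
    exact hf0 (hFY hmem)
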